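/- If every injective left R-module and every injective right R-module is flat (R is an IF ring), then every right R-module is Gorenstein flat, i.e., the right weak Gorenstein global dimension of R is 0. -/

import Mathlib

open TensorProduct

universe u

section NCTensor
variable (R : Type u) [Ring R]

/-- Generators of the defect submodule used to define the tensor product of a right
`R`-module `N` and a left `R`-module `M` over a (possibly noncommutative) ring `R`. -/
def NCRel (N M : Type u) [AddCommGroup N] [Module Rᵐᵒᵖ N] [AddCommGroup M] [Module R M] :
    Submodule ℤ (N ⊗[ℤ] M) :=
  Submodule.span ℤ { t | ∃ (n : N) (r : R) (m : M),
    t = (MulOpposite.op r • n) ⊗ₜ[ℤ] m - n ⊗ₜ[ℤ] (r • m) }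

/-- The tensor product `N ⊗_R M` of a right `R`-module and a left `R`-module, as an
abelian group. -/
def NCTensor (N M : Type u) [AddCommGroup N] [Module Rᵐᵒᵖ N] [AddCommGroup M] [Module R M] :
    Type u :=
  (N ⊗[ℤ] M) ⧸ NCRel R N M

noncomputable instance (N M : Type u) [AddCommGroup N] [Module Rᵐᵒᵖ N] [AddCommGroup M] [Module R M] :
    AddCommGroup (NCTensor R N M) :=
  inferInstanceAs (AddCommGroup ((N ⊗[ℤ] M) ⧸ NCRel R N M))

noncomputable instance (N M : Type u) [AddCommGroup N] [Module Rᵐᵒᵖ N] [AddCommGroup M] [Module R M] :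
    Module ℤ (NCTensor R N M) :=
  inferInstanceAs (Module ℤ ((N ⊗[ℤ] M) ⧸ NCRel R N M))

/-- The map `I ⊗_R M → I ⊗_R M'` induced by a map `M →ₗ[R] M'` of left modules. -/
noncomputable def NCmap (N : Type u) [AddCommGroup N] [Module Rᵐᵒᵖ N] {M M' : Type u} [AddCommGroup M]
    [Module R M] [AddCommGroup M'] [Module R M'] (f : M →ₗ[R] M') :
    NCTensor R N M →ₗ[ℤ] NCTensor R N M' :=
  Submodule.mapQ _ _ (LinearMap.lTensor N (f.restrictScalars ℤ)) <| by
    rw [NCRel, Submodule.span_le]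
    rintro t ⟨n, r, m, rfl⟩
    refine Submodule.mem_comap.mpr (Submodule.subset_span ?_)
    refine ⟨n, r, f m, ?_⟩
    erw [map_sub, LinearMap.lTensor_tmul, LinearMap.lTensor_tmul]
    simp

/-- The map `N ⊗_R M → N' ⊗_R M` induced by a map `N →ₗ[Rᵐᵒᵖ] N'` of right modules. -/
noncomputable def NCmapL (R : Type u) [Ring R] {N N' : Type u} [AddCommGroup N]
    [Module Rᵐᵒᵖ N] [AddCommGroup N'] [Module Rᵐᵒᵖ N'] (M : Type u) [AddCommGroup M]
    [Module R M] (f : N →ₗ[Rᵐᵒᵖ] N') :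
    NCTensor R N M →ₗ[ℤ] NCTensor R N' M :=
  Submodule.mapQ _ _ (LinearMap.rTensor M f.toAddMonoidHom.toIntLinearMap) <| by
    rw [NCRel, Submodule.span_le]
    rintro t ⟨n, r, m, rfl⟩
    refine Submodule.mem_comap.mpr (Submodule.subset_span ?_)
    refine ⟨f n, r, m, ?_⟩
    erw [map_sub, LinearMap.rTensor_tmul, LinearMap.rTensor_tmul]
    simp

/-- A left `R`-module `M` (over a possibly noncommutative ring) is flat if tensoring with
`M` preserves injectivity of maps of right `R`-modules. -/
def FlatModule (R : Type u) [Ring R] (M : Type u) [AddCommGroup M] [Module R M] : Prop :=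
  ∀ (N N' : Type u) [AddCommGroup N] [Module Rᵐᵒᵖ N] [AddCommGroup N'] [Module Rᵐᵒᵖ N']
    (f : N →ₗ[Rᵐᵒᵖ] N'), Function.Injective f → Function.Injective (NCmapL R M f)

end NCTensor
section GDefs
variable (R : Type u) [Ring R]

/-- A complete flat resolution witnessing that `M` is a Gorenstein flat left `R`-module:
an exact sequence `⋯ → F₂ → F₁ → F₀ → F₋₁ → ⋯` of flat left `R`-modules with
`M ≅ Im(F₀ → F₋₁)` which stays exact after applying `I ⊗_R -` for every injective right
`R`-module `I`. -/
structure CompleteFlatResolution (M : Type u) [AddCommGroup M] [Module R M] :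
    Type (u + 1) where
  F : ℤ → ModuleCat.{u} R
  d : ∀ z : ℤ, F (z + 1) →ₗ[R] F z
  flat : ∀ z, FlatModule R (F z)
  exact : ∀ z, Function.Exact (d (z + 1)) (d z)
  iso : Nonempty (M ≃ₗ[R] LinearMap.range (d (-1)))
  tensorExact : ∀ (I : Type u) [AddCommGroup I] [Module Rᵐᵒᵖ I], Module.Injective Rᵐᵒᵖ I →
    ∀ z, Function.Exact (NCmap R I (d (z + 1))) (NCmap R I (d z))

/-- A left `R`-module is Gorenstein flat if it admits a complete flat resolution. -/
def IsGorensteinFlat (M : Type u) [AddCommGroup M] [Module R M] : Prop :=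
  Nonempty (CompleteFlatResolution R M)

/-- A complete projective resolution witnessing that `M` is a Gorenstein projective left
`R`-module. -/
structure CompleteProjResolution (M : Type u) [AddCommGroup M] [Module R M] :
    Type (u + 1) where
  P : ℤ → ModuleCat.{u} R
  d : ∀ z : ℤ, P (z + 1) →ₗ[R] P z
  proj : ∀ z, Module.Projective R (P z)
  exact : ∀ z, Function.Exact (d (z + 1)) (d z)
  iso : Nonempty (M ≃ₗ[R] LinearMap.range (d (-1)))
  homExact : ∀ (Q : Type u) [AddCommGroup Q] [Module R Q], Module.Projective R Q →
    ∀ z, Function.Exact (fun g : P z →ₗ[R] Q => g.comp (d z))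
      (fun g : P (z + 1) →ₗ[R] Q => g.comp (d (z + 1)))

/-- A left `R`-module is Gorenstein projective if it admits a complete projective
resolution. -/
def IsGorensteinProjective (M : Type u) [AddCommGroup M] [Module R M] : Prop :=
  Nonempty (CompleteProjResolution R M)

/-- `gfdLE R n M` : the Gorenstein flat dimension of the left `R`-module `M` is at most
`n`, i.e. `M` has a resolution of length `n` by Gorenstein flat modules. -/
def gfdLE : ℕ → ModuleCat.{u} R → Prop
  | 0, M => IsGorensteinFlat R M
  | n + 1, M => ∃ (G : ModuleCat.{u} R) (f : G →ₗ[R] M), Function.Surjective f ∧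
      IsGorensteinFlat R G ∧ gfdLE n (ModuleCat.of R (LinearMap.ker f))

/-- `gpdLE R n M` : the Gorenstein projective dimension of `M` is at most `n`. -/
def gpdLE : ℕ → ModuleCat.{u} R → Prop
  | 0, M => IsGorensteinProjective R M
  | n + 1, M => ∃ (G : ModuleCat.{u} R) (f : G →ₗ[R] M), Function.Surjective f ∧
      IsGorensteinProjective R G ∧ gpdLE n (ModuleCat.of R (LinearMap.ker f))

/-- `fdLE R n M` : the flat dimension of `M` is at most `n`. -/
def fdLE : ℕ → ModuleCat.{u} R → Prop
  | 0, M => FlatModule R M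
  | n + 1, M => ∃ (G : ModuleCat.{u} R) (f : G →ₗ[R] M), Function.Surjective f ∧
      FlatModule R G ∧ fdLE n (ModuleCat.of R (LinearMap.ker f))

/-- `pdLE R n M` : the projective dimension of `M` is at most `n`. -/
def pdLE : ℕ → ModuleCat.{u} R → Prop
  | 0, M => Module.Projective R M
  | n + 1, M => ∃ (G : ModuleCat.{u} R) (f : G →ₗ[R] M), Function.Surjective f ∧
      Module.Projective R G ∧ pdLE n (ModuleCat.of R (LinearMap.ker f))

/-- `idLE R n M` : the injective dimension of `M` is at most `n`. -/
def idLE : ℕ → ModuleCat.{u} R → Prop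
  | 0, M => Module.Injective R M
  | n + 1, M => ∃ (I : ModuleCat.{u} R) (f : M →ₗ[R] I), Function.Injective f ∧
      Module.Injective R I ∧ idLE n (ModuleCat.of R (I ⧸ LinearMap.range f))

/-- Gorenstein flat dimension, valued in `ℕ∞`. -/
noncomputable def gfDim (M : ModuleCat.{u} R) : ℕ∞ :=
  sInf {n : ℕ∞ | ∃ k : ℕ, n = k ∧ gfdLE R k M}

/-- Flat dimension, valued in `ℕ∞`. -/
noncomputable def flatDim (M : ModuleCat.{u} R) : ℕ∞ :=
  sInf {n : ℕ∞ | ∃ k : ℕ, n = k ∧ fdLE R k M}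

/-- Injective dimension, valued in `ℕ∞`. -/
noncomputable def injDim (M : ModuleCat.{u} R) : ℕ∞ :=
  sInf {n : ℕ∞ | ∃ k : ℕ, n = k ∧ idLE R k M}

/-- The (left) weak Gorenstein global dimension of `R`:
the supremum of Gorenstein flat dimensions of all left `R`-modules. -/
noncomputable def wGgldim : ℕ∞ :=
  ⨆ M : ModuleCat.{u} R, gfDim R M

/-- `IFD R` : the supremum of flat dimensions of injective left `R`-modules. -/
noncomputable def IFD : ℕ∞ :=
  ⨆ M : ModuleCat.{u} R, ⨆ (_ : Module.Injective R M), flatDim R M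

/-- A ring is left coherent if every finitely generated left ideal is finitely
presented. -/
def LeftCoherent : Prop :=
  ∀ I : Submodule R R, I.FG → Module.FinitePresentation R I

/-- A ring is right coherent if every finitely generated right ideal is finitely
presented; right ideals are viewed as left ideals of `Rᵐᵒᵖ`. -/
def RightCoherent : Prop := LeftCoherent Rᵐᵒᵖ

end GDefs

/-- `TorVanishGT R n I M` : `Tor_i^R(I, M) = 0` for all `i > n`, expressed by saying that
for every projective resolution `P• → M` of left modules, the complex `I ⊗_R P•` obtained
by tensoring with the right module `I` is exact at every spot of index `> n`. -/
noncomputable def TorVanishGT (R : Type u) [Ring R] (n : ℕ) (I : Type u) [AddCommGroup I]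
    [Module Rᵐᵒᵖ I] (M : ModuleCat.{u} R) : Prop :=
  ∀ (P : ℕ → ModuleCat.{u} R) (d : ∀ i, P (i + 1) →ₗ[R] P i) (ε : P 0 →ₗ[R] M),
    (∀ i, Module.Projective R (P i)) → Function.Surjective ε →
    Function.Exact (d 0) ε → (∀ i, Function.Exact (d (i + 1)) (d i)) →
    ∀ j, n ≤ j → Function.Exact (NCmap R I (d (j + 1))) (NCmap R I (d j))

/-!
Every module `M` is the image in the middle of the complex obtained by splicing a free resolution
`⋯ → P₁ → P₀ → M → 0` with an injective coresolution `0 → M → I⁰ → I¹ → ⋯`. Free modules are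
flat, and over an IF ring so are the `Iⁿ`. For an injective module `J` on the other side, `J ⊗ -`
is right exact and, `J` being flat, preserves injections; so it keeps every short exact sequence
of the splicing exact, and hence the spliced complex exact.
-/

open MulOpposite

namespace NCTensor

variable {R : Type u} [Ring R] {N : Type u} [AddCommGroup N] [Module Rᵐᵒᵖ N]
  {M : Type u} [AddCommGroup M] [Module R M]

variable (R N M) in
noncomputable def mk : N ⊗[ℤ] M →ₗ[ℤ] NCTensor R N M := (NCRel R N M).mkQ

theorem mk_surjective : Function.Surjective (mk R N M) := Submodule.mkQ_surjective _

@[elab_as_elim]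
theorem induction_on {P : NCTensor R N M → Prop} (x : NCTensor R N M) (zero : P 0)
    (tmul : ∀ n m, P (mk R N M (n ⊗ₜ m))) (add : ∀ a b, P a → P b → P (a + b)) : P x := by
  obtain ⟨t, rfl⟩ := mk_surjective x
  induction t using TensorProduct.induction_on with
  | zero => simpa using zero
  | tmul n m => exact tmul n m
  | add a b ha hb => simpa using add _ _ ha hb

theorem mk_op_smul_tmul (n : N) (r : R) (m : M) :
    mk R N M ((op r • n) ⊗ₜ m) = mk R N M (n ⊗ₜ (r • m)) :=
  (Submodule.Quotient.eq _).mpr (Submodule.subset_span ⟨n, r, m, rfl⟩)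

theorem hom_ext {T : Type*} [AddCommGroup T] {φ ψ : NCTensor R N M →ₗ[ℤ] T}
    (h : ∀ n m, φ (mk R N M (n ⊗ₜ m)) = ψ (mk R N M (n ⊗ₜ m))) : φ = ψ :=
  Submodule.linearMap_qext _ (TensorProduct.ext' h)

end NCTensor

section NCmap

variable {R : Type u} [Ring R] {N : Type u} [AddCommGroup N] [Module Rᵐᵒᵖ N]
  {A B C : Type u} [AddCommGroup A] [Module R A] [AddCommGroup B] [Module R B]
  [AddCommGroup C] [Module R C]

theorem NCmap_mk_tmul (f : A →ₗ[R] B) (n : N) (a : A) :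
    NCmap R N f (NCTensor.mk R N A (n ⊗ₜ a)) = NCTensor.mk R N B (n ⊗ₜ f a) :=
  rfl

theorem NCmapL_mk_tmul {N' : Type u} [AddCommGroup N'] [Module Rᵐᵒᵖ N'] (f : N →ₗ[Rᵐᵒᵖ] N')
    (n : N) (a : A) :
    NCmapL R A f (NCTensor.mk R N A (n ⊗ₜ a)) = NCTensor.mk R N' A (f n ⊗ₜ a) :=
  rfl

theorem NCmap_comp (g : B →ₗ[R] C) (f : A →ₗ[R] B) :
    NCmap R N (g ∘ₗ f) = NCmap R N g ∘ₗ NCmap R N f :=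
  NCTensor.hom_ext fun _ _ => rfl

theorem NCmap_surjective {f : A →ₗ[R] B} (hf : Function.Surjective f) :
    Function.Surjective (NCmap R N f) := by
  intro y
  induction y using NCTensor.induction_on with
  | zero => exact ⟨0, map_zero _⟩
  | tmul n b =>
    obtain ⟨a, rfl⟩ := hf b
    exact ⟨_, NCmap_mk_tmul f n a⟩
  | add y y' hy hy' =>
    obtain ⟨x, rfl⟩ := hy
    obtain ⟨x', rfl⟩ := hy'
    exact ⟨x + x', map_add _ _ _⟩

theorem NCRel_le_map_lTensor {g : B →ₗ[R] C} (hg : Function.Surjective g) :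
    NCRel R N C ≤ (NCRel R N B).map ((g.restrictScalars ℤ).lTensor N) := by
  refine Submodule.span_le.mpr ?_
  rintro _ ⟨n, r, c, rfl⟩
  obtain ⟨b, rfl⟩ := hg c
  exact ⟨_, Submodule.subset_span ⟨n, r, b, rfl⟩, by simp⟩

theorem NCmap_exact {f : A →ₗ[R] B} {g : B →ₗ[R] C} (hfg : Function.Exact f g)
    (hg : Function.Surjective g) : Function.Exact (NCmap R N f) (NCmap R N g) := by
  have hℤ := lTensor_exact N (f := f.restrictScalars ℤ) (g := g.restrictScalars ℤ) hfg hg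
  exact (hℤ.exact_mapQ_iff _ _).mpr (inf_le_right.trans (NCRel_le_map_lTensor hg))

end NCmap

section Finsupp

variable (R : Type u) [Ring R] (N : Type u) [AddCommGroup N] [Module Rᵐᵒᵖ N] (ι : Type u)
  [DecidableEq ι]

noncomputable def opSMulHom : N ⊗[ℤ] R →ₗ[ℤ] N :=
  TensorProduct.lift
    ((Algebra.lsmul ℤ ℤ N).toLinearMap ∘ₗ (opLinearEquiv ℤ (M := R)).toLinearMap).flip

theorem opSMulHom_tmul (n : N) (r : R) : opSMulHom R N (n ⊗ₜ r) = op r • n := rfl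

noncomputable def finsuppOpSMul : N ⊗[ℤ] (ι →₀ R) →ₗ[ℤ] (ι →₀ N) :=
  Finsupp.mapRange.linearMap (opSMulHom R N) ∘ₗ (finsuppRight ℤ ℤ N R ι).toLinearMap

theorem finsuppOpSMul_tmul_apply (n : N) (v : ι →₀ R) (i : ι) :
    finsuppOpSMul R N ι (n ⊗ₜ v) i = op (v i) • n := by
  change Finsupp.mapRange (opSMulHom R N) (map_zero _) (finsuppRight ℤ ℤ N R ι (n ⊗ₜ v)) i = _
  rw [Finsupp.mapRange_apply, finsuppRight_apply_tmul_apply, opSMulHom_tmul]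

noncomputable def NCTensor.toFinsupp : NCTensor R N (ι →₀ R) →ₗ[ℤ] (ι →₀ N) :=
  (NCRel R N (ι →₀ R)).liftQ (finsuppOpSMul R N ι) <| by
    refine Submodule.span_le.mpr ?_
    rintro _ ⟨n, r, v, rfl⟩
    ext i
    simp [finsuppOpSMul_tmul_apply, mul_smul]

theorem NCTensor.toFinsupp_mk (t : N ⊗[ℤ] (ι →₀ R)) :
    NCTensor.toFinsupp R N ι (NCTensor.mk R N _ t) = finsuppOpSMul R N ι t :=
  rfl

noncomputable def NCTensor.ofFinsupp : (ι →₀ N) →ₗ[ℤ] NCTensor R N (ι →₀ R) :=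
  Finsupp.lsum ℤ fun i => NCTensor.mk R N _ ∘ₗ (TensorProduct.mk ℤ N _).flip (Finsupp.single i 1)

theorem NCTensor.ofFinsupp_comp_toFinsupp :
    NCTensor.ofFinsupp R N ι ∘ₗ NCTensor.toFinsupp R N ι = LinearMap.id := by
  refine NCTensor.hom_ext fun n v => ?_
  induction v using Finsupp.induction_linear with
  | zero => simp
  | add v w hv hw => simpa [tmul_add] using congr($hv + $hw)
  | single i r =>
    have hsingle : NCTensor.toFinsupp R N ι (NCTensor.mk R N _ (n ⊗ₜ Finsupp.single i r)) =
        Finsupp.single i (op r • n) := by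
      ext j
      rw [NCTensor.toFinsupp_mk, finsuppOpSMul_tmul_apply]
      rcases eq_or_ne i j with rfl | hij <;> simp [*]
    calc _ = NCTensor.mk R N (ι →₀ R) ((op r • n) ⊗ₜ Finsupp.single i (1 : R)) := by
          rw [LinearMap.comp_apply, hsingle, NCTensor.ofFinsupp, Finsupp.lsum_single]; rfl
      _ = _ := by rw [NCTensor.mk_op_smul_tmul, Finsupp.smul_single_one]; rfl

theorem NCTensor.toFinsupp_comp_NCmapL {N' : Type u} [AddCommGroup N'] [Module Rᵐᵒᵖ N']
    (f : N →ₗ[Rᵐᵒᵖ] N') :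
    NCTensor.toFinsupp R N' ι ∘ₗ NCmapL R (ι →₀ R) f =
      Finsupp.mapRange.linearMap (f.restrictScalars ℤ) ∘ₗ NCTensor.toFinsupp R N ι := by
  refine NCTensor.hom_ext fun n v => ?_
  ext i
  simp [NCmapL_mk_tmul, NCTensor.toFinsupp_mk, finsuppOpSMul_tmul_apply]

end Finsupp

theorem flatModule_finsupp (R : Type u) [Ring R] (ι : Type u) : FlatModule R (ι →₀ R) := by
  classical
  intro N N' _ _ _ _ f hf
  have hmap : Function.Injective
      (Finsupp.mapRange.linearMap (f.restrictScalars ℤ) : (ι →₀ N) →ₗ[ℤ] (ι →₀ N')) :=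
    Finsupp.mapRange_injective f (map_zero f) hf
  have hto : Function.Injective (NCTensor.toFinsupp R N ι) :=
    Function.LeftInverse.injective (g := NCTensor.ofFinsupp R N ι)
      (LinearMap.congr_fun (NCTensor.ofFinsupp_comp_toFinsupp R N ι))
  refine Function.Injective.of_comp (f := NCTensor.toFinsupp R N' ι) ?_
  rw [← LinearMap.coe_comp, NCTensor.toFinsupp_comp_NCmapL, LinearMap.coe_comp]
  exact hmap.comp hto

section OpOp

variable {R : Type u} [Ring R] {J : Type u} [AddCommGroup J] [Module Rᵐᵒᵖᵐᵒᵖ J] [Module R J]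
  {A B : Type u} [AddCommGroup A] [Module Rᵐᵒᵖ A] [AddCommGroup B] [Module Rᵐᵒᵖ B]

theorem NCRel_map_comm (hJ : ∀ (r : R) (j : J), op (op r) • j = r • j) :
    (NCRel Rᵐᵒᵖ J A).map (TensorProduct.comm ℤ J A).toLinearMap = NCRel R A J := by
  apply le_antisymm
  · refine Submodule.map_le_iff_le_comap.mpr (Submodule.span_le.mpr ?_)
    rintro _ ⟨j, r, a, rfl⟩
    show TensorProduct.comm ℤ J A ((op r • j) ⊗ₜ a - j ⊗ₜ (r • a)) ∈ NCRel R A J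
    rw [map_sub, comm_tmul, comm_tmul, ← neg_sub]
    refine neg_mem (Submodule.subset_span ⟨a, unop r, j, ?_⟩)
    rw [← hJ, op_unop]
  · refine Submodule.span_le.mpr ?_
    rintro _ ⟨a, r, j, rfl⟩
    refine ⟨_, neg_mem (Submodule.subset_span ⟨j, op r, a, rfl⟩), ?_⟩
    simp [hJ]

variable (R J A) in
noncomputable def NCTensor.commOpOp (hJ : ∀ (r : R) (j : J), op (op r) • j = r • j) :
    NCTensor Rᵐᵒᵖ J A ≃ₗ[ℤ] NCTensor R A J :=
  Submodule.Quotient.equiv _ _ (TensorProduct.comm ℤ J A) (NCRel_map_comm hJ)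

theorem NCmap_injective_of_flatModule (hJ : ∀ (r : R) (j : J), op (op r) • j = r • j)
    (hflat : FlatModule R J) {f : A →ₗ[Rᵐᵒᵖ] B} (hf : Function.Injective f) :
    Function.Injective (NCmap Rᵐᵒᵖ J f) := by
  have hcomm : (NCTensor.commOpOp R J B hJ).toLinearMap ∘ₗ NCmap Rᵐᵒᵖ J f =
      NCmapL R J f ∘ₗ (NCTensor.commOpOp R J A hJ).toLinearMap :=
    NCTensor.hom_ext fun _ _ => rfl
  refine Function.Injective.of_comp (f := NCTensor.commOpOp R J B hJ) ?_
  rw [← LinearEquiv.coe_toLinearMap, ← LinearMap.coe_comp, hcomm, LinearMap.coe_comp]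
  exact (hflat A B f hf).comp (NCTensor.commOpOp R J A hJ).injective

end OpOp

theorem NCmap_injective_of_injective {R : Type u} [Ring R]
    (hflat : ∀ I : ModuleCat.{u} R, Module.Injective R I → FlatModule R I)
    (J : Type u) [AddCommGroup J] [Module Rᵐᵒᵖᵐᵒᵖ J] [Module.Injective Rᵐᵒᵖᵐᵒᵖ J]
    {A B : Type u} [AddCommGroup A] [Module Rᵐᵒᵖ A] [AddCommGroup B] [Module Rᵐᵒᵖ B]
    {f : A →ₗ[Rᵐᵒᵖ] B} (hf : Function.Injective f) :
    Function.Injective (NCmap Rᵐᵒᵖ J f) := by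
  let _ : Module R J := Module.compHom J (RingEquiv.opOp R).toRingHom
  have := RingHomInvPair.of_ringEquiv (RingEquiv.opOp R).symm
  have := RingHomInvPair.of_ringEquiv_symm (RingEquiv.opOp R).symm
  have hJ : Module.Injective R J :=
    Module.Injective.of_ringEquiv (RingEquiv.opOp R).symm
      { AddEquiv.refl J with map_smul' := fun _ _ => rfl }
  exact NCmap_injective_of_flatModule (fun _ _ => rfl) (hflat (ModuleCat.of R J) hJ) hf

/-- Short exact sequences `0 → K (z + 1) → F z → K z → 0`, to be spliced into the complex
`⋯ → F (z + 1) → F z → ⋯` whose image at `F (-1)` is `K 0`. -/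
structure ShortExactSplicing (R : Type u) [Ring R] where
  K : ℤ → ModuleCat.{u} R
  F : ℤ → ModuleCat.{u} R
  ι : ∀ z, K (z + 1) →ₗ[R] F z
  π : ∀ z, F z →ₗ[R] K z
  ι_injective : ∀ z, Function.Injective (ι z)
  π_surjective : ∀ z, Function.Surjective (π z)
  exact : ∀ z, Function.Exact (ι z) (π z)

namespace ShortExactSplicing

variable {R : Type u} [Ring R] (P : ShortExactSplicing R)

noncomputable def toCompleteFlatResolution (hflat : ∀ z, FlatModule R (P.F z))
    (htensor : ∀ (I : Type u) [AddCommGroup I] [Module Rᵐᵒᵖ I], Module.Injective Rᵐᵒᵖ I →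
      ∀ z, Function.Injective (NCmap R I (P.ι z))) :
    CompleteFlatResolution R (P.K 0) where
  F := P.F
  d z := P.ι z ∘ₗ P.π (z + 1)
  flat := hflat
  exact z :=
    (P.π_surjective _).comp_exact_iff_exact.mpr
      ((P.ι_injective z).comp_exact_iff_exact.mpr (P.exact (z + 1)))
  iso := ⟨(LinearEquiv.ofInjective (P.ι (-1)) (P.ι_injective (-1))).trans
    (LinearEquiv.ofEq _ _
      (LinearMap.range_comp_of_range_eq_top _ (LinearMap.range_eq_top.mpr (P.π_surjective _))).symm)⟩
  tensorExact I _ _ hI z := by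
    rw [NCmap_comp, NCmap_comp]
    exact (NCmap_surjective (P.π_surjective _)).comp_exact_iff_exact.mpr
      ((htensor I hI z).comp_exact_iff_exact.mpr
        (NCmap_exact (P.exact (z + 1)) (P.π_surjective _)))

end ShortExactSplicing

section Splicing

open CategoryTheory

variable {S : Type u} [Ring S]

noncomputable def syzygy (M : ModuleCat.{u} S) : ℕ → ModuleCat.{u} S
  | 0 => M
  | n + 1 => ModuleCat.of S (LinearMap.ker
      (Finsupp.linearCombination S id : (syzygy M n →₀ S) →ₗ[S] syzygy M n))

noncomputable def cosyzygy (M : ModuleCat.{u} S) : ℕ → ModuleCat.{u} S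
  | 0 => M
  | n + 1 => ModuleCat.of S
      (↥(Injective.under (cosyzygy M n)) ⧸ LinearMap.range (Injective.ι (cosyzygy M n)).hom)

/-- The free resolution of `M` in degrees `≥ 0` and its injective coresolution in degrees `< 0`. -/
noncomputable def ShortExactSplicing.ofModule (M : ModuleCat.{u} S) : ShortExactSplicing S where
  K
    | .ofNat n => syzygy M n
    | .negSucc n => cosyzygy M (n + 1)
  F
    | .ofNat n => ModuleCat.of S (syzygy M n →₀ S)
    | .negSucc n => Injective.under (cosyzygy M n)
  ι
    | .ofNat n => (LinearMap.ker
        (Finsupp.linearCombination S id : (syzygy M n →₀ S) →ₗ[S] syzygy M n)).subtype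
    | .negSucc 0 => (Injective.ι M).hom
    | .negSucc (n + 1) => (Injective.ι (cosyzygy M (n + 1))).hom
  π
    | .ofNat _ => Finsupp.linearCombination S id
    | .negSucc n => (LinearMap.range (Injective.ι (cosyzygy M n)).hom).mkQ
  ι_injective
    | .ofNat _ => Submodule.injective_subtype _
    | .negSucc 0 => (ModuleCat.mono_iff_injective _).mp inferInstance
    | .negSucc (_ + 1) => (ModuleCat.mono_iff_injective _).mp inferInstance
  π_surjective
    | .ofNat _ => Finsupp.linearCombination_surjective S Function.surjective_id
    | .negSucc _ => Submodule.mkQ_surjective _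
  exact
    | .ofNat _ => LinearMap.exact_subtype_ker_map _
    | .negSucc 0 => LinearMap.exact_map_mkQ_range _
    | .negSucc (_ + 1) => LinearMap.exact_map_mkQ_range _

theorem ShortExactSplicing.flatModule_ofModule_F
    (hflat : ∀ I : ModuleCat.{u} S, Module.Injective S I → FlatModule S I) (M : ModuleCat.{u} S) :
    ∀ z, FlatModule S ((ShortExactSplicing.ofModule M).F z)
  | .ofNat n => flatModule_finsupp S (syzygy M n)
  | .negSucc _ =>
    hflat _ (Module.injective_module_of_injective_object S _ (inj := Injective.injective_under _))

end Splicing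

/-- If every injective left `R`-module and every injective right `R`-module is flat
(`R` is an IF ring), then every right `R`-module is Gorenstein flat, i.e.
`r.wGgldim R = 0`. (Right `R`-modules are regarded as left `Rᵐᵒᵖ`-modules.) -/
theorem stmt1 (R : Type u) [Ring R]
    (hleft : ∀ I : ModuleCat.{u} R, Module.Injective R ↥I → FlatModule R ↥I)
    (hright : ∀ I : ModuleCat.{u} Rᵐᵒᵖ, Module.Injective Rᵐᵒᵖ ↥I → FlatModule Rᵐᵒᵖ ↥I) :
    ∀ M : ModuleCat.{u} Rᵐᵒᵖ, IsGorensteinFlat Rᵐᵒᵖ ↥M := by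
  intro M
  let P := ShortExactSplicing.ofModule M
  exact ⟨P.toCompleteFlatResolution (ShortExactSplicing.flatModule_ofModule_F hright M)
    fun J _ _ _ z => NCmap_injective_of_injective hleft J (P.ι_injective z)⟩
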